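/- Let J and P be k×k integer matrices with Jᵀ = -J, det(J) = ±1, and PᵀJP = J. Then for all v, w ∈ Λ^k, the difference vᵀJ(t⁻¹P - I)⁻¹w̄ - conj( wᵀJ(t⁻¹P - I)⁻¹v̄ ) equals -vᵀJw̄, which lies in Λ. Hence the pairing (v,w) ↦ vᵀJ(t⁻¹P - I)⁻¹w̄ ∈ Q/Λ on Λ^k/(tP - I)Λ^k is hermitian. -/

import Mathlib

open Matrix

set_option maxHeartbeats 2000000
set_option synthInstance.maxHeartbeats 2000000

/-- The variable `t`, i.e. `X`, in the rational function field `Q = ℚ(t)`. -/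
noncomputable def tQ : RatFunc ℚ := RatFunc.X

/-- The involution `t ↦ t⁻¹` of `ℚ(t)`, applied as a function. -/
noncomputable def conjQ : RatFunc ℚ → RatFunc ℚ :=
  RatFunc.eval (algebraMap ℚ (RatFunc ℚ)) tQ⁻¹

/-- The Laurent polynomial ring `Λ = ℤ[t,t⁻¹]`, as a subring of `ℚ(t)`. -/
noncomputable def Lam : Subring (RatFunc ℚ) := Subring.closure {tQ, tQ⁻¹}

/-!
Put `A = t⁻¹P - 1` and `C = tP - 1 = conj A`. As `J` is skew with integer entries, the conjugate
of `wᵀJA⁻¹v̄` is `vᵀ(JC⁻¹)ᵀw̄ = -vᵀ(Cᵀ)⁻¹Jw̄`, so the claim reduces to `JA⁻¹ + (Cᵀ)⁻¹J = -J`.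
Multiplied by `Cᵀ` on the left and by `A` on the right, this reads `CᵀJ + JA + CᵀJA = PᵀJP - J = 0`.
`A` is invertible because `det (1 - t⁻¹P)` is the reversed characteristic polynomial of `P`,
which has constant term `1`, evaluated at the transcendental `t⁻¹`; hence so is `C = conj A`.
-/

open Polynomial

lemma transcendental_tQ : Transcendental ℚ tQ := by
  simpa [tQ, RatFunc.algebraMap_X] using (transcendental_algebraMap_iff
    (IsFractionRing.injective ℚ[X] (RatFunc ℚ))).2 (transcendental_X ℚ)

lemma transcendental_tQ_inv : Transcendental ℚ tQ⁻¹ :=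
  IsAlgebraic.inv_iff.not.2 transcendental_tQ

/-- `conjQ` is given by `RatFunc.eval`, which is not multiplicative in general; it is here
because `t⁻¹` is transcendental, so no denominator evaluates to zero. -/
noncomputable def conjQHom : RatFunc ℚ →+* RatFunc ℚ :=
  RatFunc.liftRingHom (aeval tQ⁻¹).toRingHom <|
    nonZeroDivisors_le_comap_nonZeroDivisors_of_injective _
      (transcendental_iff_injective.mp transcendental_tQ_inv)

lemma conjQHom_apply (x : RatFunc ℚ) : conjQHom x = conjQ x := by
  rw [conjQHom, RatFunc.liftRingHom_apply]
  rfl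

lemma conjQHom_algebraMap (p : ℚ[X]) :
    conjQHom (algebraMap ℚ[X] (RatFunc ℚ) p) = aeval tQ⁻¹ p := by
  rw [conjQHom, ← div_one (algebraMap _ _ p), ← map_one (algebraMap ℚ[X] (RatFunc ℚ)),
    RatFunc.liftRingHom_apply_div]
  simp

lemma conjQHom_tQ : conjQHom tQ = tQ⁻¹ := by
  simpa [tQ, RatFunc.algebraMap_X] using conjQHom_algebraMap X

lemma conjQHom_involutive : Function.Involutive conjQHom := by
  suffices conjQHom.comp conjQHom = RingHom.id _ from RingHom.congr_fun this
  refine IsFractionRing.injective_comp_algebraMap (A := ℚ[X])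
    (Polynomial.ringHom_ext (fun a => ?_) ?_)
  · simp
  · show conjQHom (conjQHom tQ) = tQ
    rw [conjQHom_tQ, map_inv₀, conjQHom_tQ, inv_inv]

lemma tQ_mem_Lam : tQ ∈ Lam := Subring.subset_closure (by simp)

lemma tQ_inv_mem_Lam : tQ⁻¹ ∈ Lam := Subring.subset_closure (by simp)

lemma conjQHom_mem_Lam {x : RatFunc ℚ} (hx : x ∈ Lam) : conjQHom x ∈ Lam := by
  suffices Lam ≤ Lam.comap conjQHom from this hx
  refine Subring.closure_le.2 ?_
  rintro _ (rfl | rfl)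
  · simpa [conjQHom_tQ] using tQ_inv_mem_Lam
  · simpa [conjQHom_tQ] using tQ_mem_Lam

section

variable {n : Type*} [Fintype n]

theorem RingHom.map_dotProduct_mulVec {R S : Type*} [CommRing R] [CommRing S] (f : R →+* S)
    (v w : n → R) (M : Matrix n n R) : f (v ⬝ᵥ M *ᵥ w) = (f ∘ v) ⬝ᵥ M.map f *ᵥ (f ∘ w) := by
  rw [RingHom.map_dotProduct]
  congr 1
  funext i
  exact RingHom.map_mulVec f M w i

theorem Matrix.dotProduct_mulVec_mem {R : Type*} [CommRing R] (S : Subring R) {v w : n → R}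
    {M : Matrix n n R} (hv : ∀ i, v i ∈ S) (hM : ∀ i j, M i j ∈ S) (hw : ∀ i, w i ∈ S) :
    v ⬝ᵥ M *ᵥ w ∈ S :=
  S.sum_mem fun i _ => S.mul_mem (hv i) (S.sum_mem fun j _ => S.mul_mem (hM i j) (hw j))

variable [DecidableEq n]

theorem Matrix.det_one_sub_smul_map_ne_zero {R A : Type*} [CommRing R] [Nontrivial R]
    [CommRing A] [Algebra R A] (M : Matrix n n R) {a : A} (ha : Transcendental R a) :
    (1 - a • M.map (algebraMap R A)).det ≠ 0 := by
  have hmap : 1 - a • M.map (algebraMap R A) = (1 - (X : R[X]) • M.map C).map (aeval a) := by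
    ext i j
    simp [one_apply, aeval_def, Algebra.commutes, apply_ite]
  rw [hmap, ← AlgHom.mapMatrix_apply, ← AlgHom.map_det]
  intro h
  have hrev : M.charpolyRev = 0 :=
    transcendental_iff_injective.mp ha (by simpa [charpolyRev] using h)
  simpa [hrev] using M.eval_charpolyRev

theorem Matrix.map_nonsing_inv {R S : Type*} [CommRing R] [CommRing S] (f : R →+* S)
    (M : Matrix n n R) (hM : IsUnit M.det) : M⁻¹.map f = (M.map f)⁻¹ := by
  refine (inv_eq_right_inv ?_).symm
  rw [← RingHom.mapMatrix_apply, ← RingHom.mapMatrix_apply, ← map_mul, mul_nonsing_inv _ hM,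
    map_one]

variable {K : Type*} [Field K]

theorem Matrix.mul_inv_add_transpose_inv_mul_eq_neg {J P : Matrix n n K} {s : K} (hs : s ≠ 0)
    (hP : Pᵀ * J * P = J) (hA : (s⁻¹ • P - 1).det ≠ 0) (hC : (s • P - 1).det ≠ 0) :
    J * (s⁻¹ • P - 1)⁻¹ + ((s • P - 1)ᵀ)⁻¹ * J = -J := by
  set A := s⁻¹ • P - 1
  set C := s • P - 1
  have hAu : IsUnit A.det := hA.isUnit
  have hCu : IsUnit Cᵀ.det := by rw [det_transpose]; exact hC.isUnit
  have hexpand : Cᵀ * J + J * A = -(Cᵀ * J * A) := by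
    simp only [A, C, transpose_sub, transpose_smul, transpose_one, Matrix.sub_mul, Matrix.mul_sub,
      Matrix.smul_mul, Matrix.mul_smul, smul_smul, one_smul, Matrix.one_mul, Matrix.mul_one, hP,
      smul_sub, inv_mul_cancel₀ hs]
    abel
  calc J * A⁻¹ + (Cᵀ)⁻¹ * J = (Cᵀ)⁻¹ * (Cᵀ * J + J * A) * A⁻¹ := by
        rw [Matrix.mul_add, Matrix.add_mul, nonsing_inv_mul_cancel_left _ _ hCu,
          ← Matrix.mul_assoc, mul_nonsing_inv_cancel_right _ _ hAu, add_comm]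
    _ = -J := by
        rw [hexpand, Matrix.mul_neg, Matrix.neg_mul, Matrix.mul_assoc Cᵀ,
          nonsing_inv_mul_cancel_left _ _ hCu, mul_nonsing_inv_cancel_right _ _ hAu]

theorem Matrix.dotProduct_mul_inv_mulVec_sub_map_eq (σ : K →+* K) (hσ : Function.Involutive σ)
    {J P : Matrix n n K} {s : K} (hs : s ≠ 0) (hσs : σ s = s⁻¹) (hJσ : J.map σ = J)
    (hPσ : P.map σ = P) (hJ : Jᵀ = -J) (hP : Pᵀ * J * P = J) (hA : (s⁻¹ • P - 1).det ≠ 0)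
    (v w : n → K) :
    v ⬝ᵥ (J * (s⁻¹ • P - 1)⁻¹) *ᵥ (fun i => σ (w i))
      - σ (w ⬝ᵥ (J * (s⁻¹ • P - 1)⁻¹) *ᵥ (fun i => σ (v i)))
      = -(v ⬝ᵥ J *ᵥ fun i => σ (w i)) := by
  set A := s⁻¹ • P - 1
  set C := s • P - 1
  have hAσ : A.map σ = C := by
    ext i j
    have hPij := congr_fun₂ hPσ i j
    rcases eq_or_ne i j with rfl | hij <;> simp_all [A, C, map_inv₀]
  have hC : C.det ≠ 0 := by
    rw [← hAσ, ← RingHom.mapMatrix_apply, ← RingHom.map_det]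
    exact (map_ne_zero σ).2 hA
  have hconj : σ (w ⬝ᵥ (J * A⁻¹) *ᵥ (fun i => σ (v i)))
      = v ⬝ᵥ (-((Cᵀ)⁻¹ * J)) *ᵥ (fun i => σ (w i)) := by
    rw [RingHom.map_dotProduct_mulVec, Matrix.map_mul, hJσ, map_nonsing_inv σ A hA.isUnit, hAσ,
      dotProduct_mulVec, ← mulVec_transpose, dotProduct_comm, transpose_mul,
      transpose_nonsing_inv, hJ, Matrix.mul_neg]
    simp only [Function.comp_def, hσ _]
  rw [hconj, neg_mulVec, dotProduct_neg, sub_neg_eq_add, ← dotProduct_add, ← add_mulVec,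
    mul_inv_add_transpose_inv_mul_eq_neg hs hP hA hC, neg_mulVec, dotProduct_neg]

end

lemma det_tQ_inv_smul_map_intCast_sub_one_ne_zero {n : Type*} [Fintype n] [DecidableEq n]
    (P : Matrix n n ℤ) : (tQ⁻¹ • (P.map Int.cast : Matrix n n (RatFunc ℚ)) - 1).det ≠ 0 := by
  rw [← neg_sub, det_neg]
  refine mul_ne_zero (by simp) ?_
  simpa [Matrix.map_map] using
    det_one_sub_smul_map_ne_zero (P.map (Int.cast : ℤ → ℚ)) transcendental_tQ_inv

theorem fibred_blanchfield_hermitian_general (k : ℕ)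
    (J P : Matrix (Fin k) (Fin k) ℤ)
    (hJskew : Jᵀ = -J) (hP : Pᵀ * J * P = J)
    (J' P' : Matrix (Fin k) (Fin k) (RatFunc ℚ))
    (hJ' : J' = J.map Int.cast) (hP' : P' = P.map Int.cast)
    (v w : Fin k → RatFunc ℚ) (hv : ∀ i, v i ∈ Lam) (hw : ∀ i, w i ∈ Lam) :
    (v ⬝ᵥ (J' * (tQ⁻¹ • P' - 1)⁻¹).mulVec (fun i => conjQ (w i))
      - conjQ (w ⬝ᵥ (J' * (tQ⁻¹ • P' - 1)⁻¹).mulVec (fun i => conjQ (v i)))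
      = -(v ⬝ᵥ J'.mulVec (fun i => conjQ (w i))))
    ∧ -(v ⬝ᵥ J'.mulVec (fun i => conjQ (w i))) ∈ Lam := by
  subst hJ' hP'
  have hJσ : (J.map Int.cast).map conjQHom = J.map Int.cast := by ext; simp
  have hPσ : (P.map Int.cast).map conjQHom = P.map Int.cast := by ext; simp
  have hJskew' : (J.map Int.cast : Matrix (Fin k) (Fin k) (RatFunc ℚ))ᵀ = -J.map Int.cast := by
    rw [← transpose_map, hJskew]
    ext
    simp
  have hPJ' : (P.map Int.cast)ᵀ * J.map Int.cast * P.map Int.cast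
      = (J.map Int.cast : Matrix (Fin k) (Fin k) (RatFunc ℚ)) := by
    have h := congr_arg (Int.castRingHom (RatFunc ℚ)).mapMatrix hP
    rwa [map_mul, map_mul, RingHom.mapMatrix_apply, RingHom.mapMatrix_apply,
      RingHom.mapMatrix_apply, transpose_map] at h
  have hdiff := dotProduct_mul_inv_mulVec_sub_map_eq conjQHom conjQHom_involutive
    (s := tQ) RatFunc.X_ne_zero conjQHom_tQ hJσ hPσ hJskew' hPJ'
    (det_tQ_inv_smul_map_intCast_sub_one_ne_zero P) v w
  simp only [conjQHom_apply] at hdiff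
  refine ⟨hdiff, neg_mem (dotProduct_mulVec_mem Lam hv (fun i j => ?_) fun i => ?_)⟩
  · simp [intCast_mem]
  · simpa [conjQHom_apply] using conjQHom_mem_Lam (hw i)

theorem fibred_blanchfield_hermitian (k : ℕ)
    (J P : Matrix (Fin k) (Fin k) ℤ)
    (hJskew : Jᵀ = -J) (hJ : J.det = 1 ∨ J.det = -1) (hP : Pᵀ * J * P = J)
    (J' P' : Matrix (Fin k) (Fin k) (RatFunc ℚ))
    (hJ' : J' = J.map Int.cast) (hP' : P' = P.map Int.cast)
    (v w : Fin k → RatFunc ℚ) (hv : ∀ i, v i ∈ Lam) (hw : ∀ i, w i ∈ Lam) :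
    (v ⬝ᵥ (J' * (tQ⁻¹ • P' - 1)⁻¹).mulVec (fun i => conjQ (w i))
      - conjQ (w ⬝ᵥ (J' * (tQ⁻¹ • P' - 1)⁻¹).mulVec (fun i => conjQ (v i)))
      = -(v ⬝ᵥ J'.mulVec (fun i => conjQ (w i))))
    ∧ -(v ⬝ᵥ J'.mulVec (fun i => conjQ (w i))) ∈ Lam :=
  fibred_blanchfield_hermitian_general k J P hJskew hP J' P' hJ' hP' v w hv hw
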